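/- For every c > 0, σ > 0 and positive integer n, the infinite product ∏_{k=0}^{∞} [1 + (2πn/((ln 10)·(c·k+1)))²]^{−1} converges, and the modulus of the n-th Benford–Fourier coefficient of the generalized Gaussian density satisfies |a_n| = ( ∏_{k=0}^{∞} [1 + (2πn/((ln 10)·(c·k+1)))²]^{−1} )^{1/2}. -/

import Mathlib

/-!
With `t = 2πn / ln 10`, the coefficient `a_n` is the Mellin transform of the even density at
`s = 1 - it`; substituting `u = (β|x|)^c` turns it into a Gamma integral,
`a_n = β^{it} Γ(z) / Γ(1/c)` with `z = (1 - it)/c`, so `|a_n| = |Γ(z)| / Γ(Re z)`.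
Euler's limit formula `Γ(z) = lim N^z N! / ∏_{j ≤ N} (z + j)` then gives
`(|Γ(z)| / Γ(Re z))² = ∏_k (Re z + k)² / |z + k|² = ∏_k (1 + (Im z / (Re z + k))²)⁻¹`,
and `Im z / (Re z + k) = -t / (c k + 1)`.
-/

open Real MeasureTheory

/-- Scale parameter β of the generalized Gaussian density. -/
noncomputable def ggdBeta (c σ : ℝ) : ℝ :=
  (1 / σ) * Real.sqrt (Real.Gamma (3 / c) / Real.Gamma (1 / c))

/-- Normalizing constant A of the generalized Gaussian density. -/
noncomputable def ggdA (c σ : ℝ) : ℝ :=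
  ggdBeta c σ * c / (2 * Real.Gamma (1 / c))

/-- The generalized Gaussian density with shape factor `c` and scale `σ`. -/
noncomputable def ggdPdf (c σ : ℝ) (x : ℝ) : ℝ :=
  ggdA c σ * Real.exp (-|ggdBeta c σ * x| ^ c)


/-- The `n`-th Benford–Fourier coefficient of the generalized Gaussian density:
`a_n = ∫ P_{c,σ}(x) · exp(−2πi·n·log₁₀|x|) dx`. -/
noncomputable def bfCoeff (c σ : ℝ) (n : ℕ) : ℂ :=
  ∫ x : ℝ, (ggdPdf c σ x : ℂ) *
    Complex.exp (-((2 * π * n * Real.logb 10 |x| : ℝ) : ℂ) * Complex.I)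

open Set Filter Finset Topology

theorem multipliable_inv_one_add_sq_div_add (y : ℝ) {r : ℝ} (hr : 0 < r) :
    Multipliable fun k : ℕ => (1 + (y / (r + k)) ^ 2)⁻¹ := by
  have hsum : Summable fun k : ℕ => (y / (r + k)) ^ 2 := by
    refine (((Real.summable_one_div_nat_add_rpow r 2).2 one_lt_two).mul_left (y ^ 2)).congr
      fun k => ?_
    rw [abs_of_pos (by positivity), Real.rpow_two, add_comm]
    field_simp
  refine Real.multipliable_of_summable_log (fun k => by positivity) ?_
  simpa only [Real.log_inv] using (Real.summable_log_one_add_of_summable hsum).neg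

theorem Complex.sq_re_div_norm_eq_inv_one_add_sq {w : ℂ} (hw : w.re ≠ 0) :
    (w.re / ‖w‖) ^ 2 = (1 + (w.im / w.re) ^ 2)⁻¹ := by
  rw [div_pow, Complex.sq_norm, Complex.normSq_apply]
  field_simp

theorem Complex.norm_GammaSeq_div_GammaSeq_re (z : ℂ) {N : ℕ} (hN : N ≠ 0) :
    ‖Complex.GammaSeq z N‖ / Real.GammaSeq z.re N =
      ∏ j ∈ range (N + 1), (z.re + j) / ‖z + j‖ := by
  have hnum : (N : ℝ) ^ z.re * N.factorial ≠ 0 := by positivity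
  rw [Complex.GammaSeq, Real.GammaSeq, norm_div, norm_mul,
    Complex.norm_natCast_cpow_of_pos (Nat.pos_of_ne_zero hN), norm_prod,
    Complex.norm_natCast, prod_div_distrib, div_div_div_cancel_left' _ _ hnum]

theorem Complex.hasProd_norm_Gamma_div_Gamma_re_sq {z : ℂ} (hz : 0 < z.re) :
    HasProd (fun k : ℕ => (1 + (z.im / (z.re + k)) ^ 2)⁻¹)
      ((‖Complex.Gamma z‖ / Real.Gamma z.re) ^ 2) := by
  rw [(multipliable_inv_one_add_sq_div_add z.im hz).hasProd_iff_tendsto_nat,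
    ← tendsto_add_atTop_iff_nat 1]
  have hlim : Tendsto (fun N => (‖Complex.GammaSeq z N‖ / Real.GammaSeq z.re N) ^ 2) atTop
      (𝓝 ((‖Complex.Gamma z‖ / Real.Gamma z.re) ^ 2)) :=
    ((Complex.GammaSeq_tendsto_Gamma z).norm.div (Real.GammaSeq_tendsto_Gamma z.re)
      (Real.Gamma_pos_of_pos hz).ne').pow 2
  refine hlim.congr' ?_
  filter_upwards [eventually_ne_atTop 0] with N hN
  rw [Complex.norm_GammaSeq_div_GammaSeq_re z hN, ← Finset.prod_pow]
  refine prod_congr rfl fun j _ => ?_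
  simpa using Complex.sq_re_div_norm_eq_inv_one_add_sq (w := z + j)
    (by rw [Complex.add_re, Complex.natCast_re]; positivity)

theorem integral_comp_abs_of_integrableOn {E : Type*} [NormedAddCommGroup E] [NormedSpace ℝ E]
    {f : ℝ → E} (hf : IntegrableOn f (Ioi 0)) :
    ∫ x, f |x| = (2 : ℝ) • ∫ x in Ioi 0, f x := by
  have hpos : EqOn (fun x => f |x|) f (Ioi 0) := fun x hx => congrArg f (abs_of_pos hx)
  have hneg : ∫ x in Iic 0, f |x| = ∫ x in Ioi 0, f x := by
    have h := integral_comp_neg_Ioi 0 (fun x => f |x|)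
    rw [neg_zero] at h
    rw [← h]
    exact setIntegral_congr_fun measurableSet_Ioi fun x hx => by rw [abs_neg]; exact hpos hx
  have hint_neg : IntegrableOn (fun x => f |x|) (Iic 0) := by
    rw [← (Measure.measurePreserving_neg volume).integrableOn_comp_preimage
      (Homeomorph.neg ℝ).measurableEmbedding]
    simp only [Function.comp_def, abs_neg, neg_preimage, neg_Iic, neg_zero]
    exact (integrableOn_Ici_iff_integrableOn_Ioi).2 (hf.congr_fun hpos.symm measurableSet_Ioi)
  rw [← intervalIntegral.integral_Iic_add_Ioi hint_neg (hf.congr_fun hpos.symm measurableSet_Ioi),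
    hneg, setIntegral_congr_fun measurableSet_Ioi hpos, two_smul]

theorem mellin_exp_neg_mul_rpow {β p : ℝ} (hβ : 0 < β) (hp : 0 < p) {s : ℂ} (hs : 0 < s.re) :
    mellin (fun x => (Real.exp (-(β * x) ^ p) : ℂ)) s =
      (β : ℂ) ^ (-s) * (p⁻¹ * Complex.Gamma (s / p)) := by
  rw [mellin_comp_mul_left (fun x => (Real.exp (-x ^ p) : ℂ)) s hβ,
    mellin_comp_rpow (fun x => (Real.exp (-x) : ℂ)), ← Complex.GammaIntegral_eq_mellin,
    ← Complex.Gamma_eq_integral (by simpa [Complex.div_ofReal_re] using div_pos hs hp)]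
  simp [abs_of_pos hp]

theorem mellinConvergent_exp_neg_mul_rpow {β p : ℝ} (hβ : 0 < β) (hp : 0 < p) {s : ℂ}
    (hs : 0 < s.re) :
    MellinConvergent (fun x => (Real.exp (-(β * x) ^ p) : ℂ)) s := by
  rw [MellinConvergent.comp_mul_left (f := fun x => (Real.exp (-x ^ p) : ℂ)) hβ,
    MellinConvergent.comp_rpow (f := fun x => (Real.exp (-x) : ℂ)) hp.ne']
  refine (Complex.GammaIntegral_convergent (s := s / p) ?_).congr_fun
    (fun x _ => by simp [mul_comm]) measurableSet_Ioi
  simpa [Complex.div_ofReal_re] using div_pos hs hp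

theorem ggdBeta_pos {c σ : ℝ} (hc : 0 < c) (hσ : 0 < σ) : 0 < ggdBeta c σ := by
  have := Real.Gamma_pos_of_pos (div_pos three_pos hc)
  have := Real.Gamma_pos_of_pos (one_div_pos.2 hc)
  unfold ggdBeta
  positivity

theorem integral_ggdPdf_mul_abs_cpow {c σ : ℝ} (hc : 0 < c) (hσ : 0 < σ) {s : ℂ}
    (hs : 0 < s.re) :
    ∫ x, (ggdPdf c σ x : ℂ) * ((|x| : ℝ) : ℂ) ^ (s - 1) =
      (ggdBeta c σ : ℂ) ^ (1 - s) * Complex.Gamma (s / c) / Real.Gamma (1 / c) := by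
  have hβ := ggdBeta_pos hc hσ
  set g : ℝ → ℂ := fun x => (Real.exp (-(ggdBeta c σ * x) ^ c) : ℂ)
  calc ∫ x, (ggdPdf c σ x : ℂ) * ((|x| : ℝ) : ℂ) ^ (s - 1)
      = ∫ x, (fun u : ℝ => (ggdA c σ : ℂ) * ((u : ℂ) ^ (s - 1) • g u)) |x| := by
        congr 1 with x
        simp only [ggdPdf, g, abs_mul, abs_of_pos hβ, smul_eq_mul, Complex.ofReal_mul]
        ring
    _ = 2 * ggdA c σ * mellin g s := by
        rw [integral_comp_abs_of_integrableOn
          ((mellinConvergent_exp_neg_mul_rpow hβ hc hs).const_mul _), integral_const_mul,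
          Complex.real_smul, mellin, Complex.ofReal_ofNat]
        ring
    _ = _ := by
        rw [mellin_exp_neg_mul_rpow hβ hc hs, ggdA, sub_eq_add_neg,
          Complex.cpow_add _ _ (Complex.ofReal_ne_zero.2 hβ.ne'), Complex.cpow_one]
        have hc' : (c : ℂ) ≠ 0 := Complex.ofReal_ne_zero.2 hc.ne'
        push_cast
        field_simp

theorem bfCoeff_eq {c σ : ℝ} (hc : 0 < c) (hσ : 0 < σ) (n : ℕ) :
    bfCoeff c σ n = (ggdBeta c σ : ℂ) ^ ((2 * π * n / Real.log 10 : ℝ) * Complex.I) *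
      Complex.Gamma ((1 - (2 * π * n / Real.log 10 : ℝ) * Complex.I) / c) /
        Real.Gamma (1 / c) := by
  have h := integral_ggdPdf_mul_abs_cpow hc hσ
    (s := 1 - ((2 * π * n / Real.log 10 : ℝ) : ℂ) * Complex.I)
    (by rw [Complex.sub_re, Complex.one_re, Complex.re_ofReal_mul, Complex.I_re]; norm_num)
  rw [sub_sub_cancel, sub_sub_cancel_left] at h
  rw [← h, bfCoeff]
  -- the integrands differ only at `x = 0`, where `0 ^ w` takes a junk value
  refine integral_congr_ae ?_
  filter_upwards [Measure.ae_ne volume 0] with x hx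
  rw [Complex.cpow_def_of_ne_zero (by simpa using hx), ← Complex.ofReal_log (abs_nonneg x),
    Real.logb]
  push_cast
  congr 2
  ring

theorem norm_bfCoeff {c σ : ℝ} (hc : 0 < c) (hσ : 0 < σ) (n : ℕ) :
    ‖bfCoeff c σ n‖ =
      ‖Complex.Gamma ((1 - (2 * π * n / Real.log 10 : ℝ) * Complex.I) / c)‖ /
        Real.Gamma (1 / c) := by
  rw [bfCoeff_eq hc hσ n, norm_div, norm_mul,
    Complex.norm_cpow_eq_rpow_re_of_pos (ggdBeta_pos hc hσ), Complex.norm_real,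
    Real.norm_of_nonneg (Real.Gamma_pos_of_pos (one_div_pos.2 hc)).le]
  simp only [Complex.re_ofReal_mul, Complex.I_re, mul_zero, Real.rpow_zero, one_mul]

theorem bfCoeff_abs_eq_tprod_general (c σ : ℝ) (hc : 0 < c) (hσ : 0 < σ) (n : ℕ) :
    Multipliable (fun k : ℕ => (1 + (2 * π * n / (Real.log 10 * (c * k + 1))) ^ 2)⁻¹) ∧
    ‖bfCoeff c σ n‖ =
      Real.sqrt (∏' k : ℕ, (1 + (2 * π * n / (Real.log 10 * (c * k + 1))) ^ 2)⁻¹) := by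
  set t : ℝ := 2 * π * n / Real.log 10 with ht
  set z : ℂ := (1 - t * Complex.I) / c
  have hz_re : z.re = 1 / c := by simp [z, Complex.div_ofReal_re]
  have hz_im : z.im = -t / c := by simp [z, Complex.div_ofReal_im]
  have hfactor : (fun k : ℕ => (1 + (2 * π * n / (Real.log 10 * (c * k + 1))) ^ 2)⁻¹) =
      fun k : ℕ => (1 + (z.im / (z.re + k)) ^ 2)⁻¹ := by
    funext k
    rw [hz_re, hz_im, ht]
    field_simp
    ring
  have hz_pos : 0 < z.re := hz_re ▸ one_div_pos.2 hc
  have hprod := Complex.hasProd_norm_Gamma_div_Gamma_re_sq hz_pos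
  rw [hfactor, hprod.tprod_eq, norm_bfCoeff hc hσ n, ← hz_re,
    Real.sqrt_sq (div_nonneg (norm_nonneg _) (Real.Gamma_pos_of_pos hz_pos).le)]
  exact ⟨hprod.multipliable, rfl⟩

/-- The modulus of the `n`-th Benford–Fourier coefficient of the generalized
Gaussian density is given by a convergent infinite product depending only on
the shape factor `c`. -/
theorem bfCoeff_abs_eq_tprod (c σ : ℝ) (hc : 0 < c) (hσ : 0 < σ) (n : ℕ) (hn : 0 < n) :
    Multipliable (fun k : ℕ => (1 + (2 * π * n / (Real.log 10 * (c * k + 1))) ^ 2)⁻¹) ∧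
    ‖bfCoeff c σ n‖ =
      Real.sqrt (∏' k : ℕ, (1 + (2 * π * n / (Real.log 10 * (c * k + 1))) ^ 2)⁻¹) :=
  bfCoeff_abs_eq_tprod_general c σ hc hσ n
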